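/- Let d ≥ 1, c ∈ ℝ^d, r > 0, let B = {x ∈ ℝ^d : ‖x − c‖ < r}, and let l ≥ 1 be an integer. Then the number of multi-indices j ∈ {0,…,2^l−1}^d for which the level-l dyadic cube ∏_{i=1}^d [j_i·2^{-l}, (j_i+1)·2^{-l}] is contained in B while the level-(l−1) dyadic cube ∏_{i=1}^d [⌊j_i/2⌋·2^{-(l−1)}, (⌊j_i/2⌋+1)·2^{-(l−1)}] containing it is not contained in B is at most 2^d times the number of multi-indices k ∈ {0,…,2^{l−1}−1}^d for which the level-(l−1) dyadic cube ∏_{i=1}^d [k_i·2^{-(l−1)}, (k_i+1)·2^{-(l−1)}] intersects the sphere {x ∈ ℝ^d : ‖x − c‖ = r}. -/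

import Mathlib

/-- The level-`l` dyadic cube of `[0,1]^d` with multi-index `j`:
`∏ᵢ [jᵢ·2^{-l}, (jᵢ+1)·2^{-l}]`. -/
def dyadicCube (d l : ℕ) (j : Fin d → ℕ) : Set (EuclideanSpace ℝ (Fin d)) :=
  {x | ∀ i, (j i : ℝ) / 2 ^ l ≤ x i ∧ x i ≤ ((j i : ℝ) + 1) / 2 ^ l}

/-!
If a level-`(l+1)` cube lies in the ball but its parent does not, the parent is convex and meets
both the ball and its complement, so by the intermediate value theorem applied to `dist · c` it
meets the sphere. Since `j ↦ (⌊j / 2⌋, j mod 2)` is injective, every parent has at most `2 ^ d`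
children, which gives the factor `2 ^ d`.
-/

open Metric Set

theorem IsPreconnected.inter_sphere_nonempty_of_not_subset_ball {X : Type*} [PseudoMetricSpace X]
    {s : Set X} (hs : IsPreconnected s) {c : X} {r : ℝ} (hin : (s ∩ ball c r).Nonempty)
    (hout : ¬ s ⊆ ball c r) : (s ∩ sphere c r).Nonempty := by
  obtain ⟨x, hxs, hxr⟩ := hin
  obtain ⟨y, hys, hyr⟩ := not_subset.mp hout
  obtain ⟨z, hzs, hzr⟩ := hs.intermediate_value hxs hys
    (continuous_id.dist continuous_const).continuousOn ⟨(mem_ball.mp hxr).le, not_lt.mp hyr⟩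
  exact ⟨z, hzs, hzr⟩

theorem dyadicCube_eq_iInter (d l : ℕ) (j : Fin d → ℕ) :
    dyadicCube d l j =
      ⋂ i, EuclideanSpace.proj i ⁻¹' Icc ((j i : ℝ) / 2 ^ l) (((j i : ℝ) + 1) / 2 ^ l) := by
  ext x
  simp [dyadicCube]

theorem convex_dyadicCube (d l : ℕ) (j : Fin d → ℕ) : Convex ℝ (dyadicCube d l j) := by
  rw [dyadicCube_eq_iInter]
  exact convex_iInter fun i => (convex_Icc _ _).linear_preimage (EuclideanSpace.proj i).toLinearMap

theorem corner_mem_dyadicCube (d l : ℕ) (j : Fin d → ℕ) :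
    WithLp.toLp 2 (fun i => (j i : ℝ) / 2 ^ l) ∈ dyadicCube d l j := fun i =>
  ⟨le_rfl, div_le_div_of_nonneg_right (le_add_of_nonneg_right zero_le_one) (by positivity)⟩

theorem dyadicCube_succ_subset (d l : ℕ) (j : Fin d → ℕ) :
    dyadicCube d (l + 1) j ⊆ dyadicCube d l (fun i => j i / 2) := by
  intro x hx i
  have hscale (a : ℝ) : a / 2 ^ l = a * 2 / 2 ^ (l + 1) := by
    rw [pow_succ, mul_div_mul_right _ _ two_ne_zero]
  have hlo : ((j i / 2 : ℕ) : ℝ) * 2 ≤ j i := by exact_mod_cast Nat.div_mul_le_self (j i) 2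
  have hhi : (j i : ℝ) + 1 ≤ (((j i / 2 : ℕ) : ℝ) + 1) * 2 := by
    exact_mod_cast (by omega : j i + 1 ≤ (j i / 2 + 1) * 2)
  rw [hscale, hscale]
  exact ⟨(div_le_div_of_nonneg_right hlo (by positivity)).trans (hx i).1,
    (hx i).2.trans (div_le_div_of_nonneg_right hhi (by positivity))⟩

def dyadicParent {d l : ℕ} (j : Fin d → Fin (2 ^ (l + 1))) (i : Fin d) : Fin (2 ^ l) :=
  ⟨j i / 2, Nat.div_lt_of_lt_mul (pow_succ' 2 l ▸ (j i).isLt)⟩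

theorem ncard_le_two_pow_mul_ncard_of_dyadicParent_mem {d l : ℕ}
    {S : Set (Fin d → Fin (2 ^ (l + 1)))} {T : Set (Fin d → Fin (2 ^ l))}
    (h : ∀ j ∈ S, dyadicParent j ∈ T) : S.ncard ≤ 2 ^ d * T.ncard := by
  let parity (j : Fin d → Fin (2 ^ (l + 1))) (i : Fin d) : Fin 2 := ⟨j i % 2, Nat.mod_lt _ two_pos⟩
  have hinj : Function.Injective fun j => (dyadicParent j, parity j) := by
    intro j j' h
    funext i
    have hdiv : (j i : ℕ) / 2 = j' i / 2 := congrArg Fin.val (congrFun (Prod.ext_iff.mp h).1 i)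
    have hmod : (j i : ℕ) % 2 = j' i % 2 := congrArg Fin.val (congrFun (Prod.ext_iff.mp h).2 i)
    exact Fin.ext (by rw [← Nat.div_add_mod (j i) 2, hdiv, hmod, Nat.div_add_mod])
  calc S.ncard ≤ (T ×ˢ (univ : Set (Fin d → Fin 2))).ncard :=
        ncard_le_ncard_of_injOn _ (fun j hj => ⟨h j hj, mem_univ _⟩) hinj.injOn
    _ = 2 ^ d * T.ncard := by
        rw [ncard_prod, ncard_univ, Nat.card_fun, Nat.card_fin, Nat.card_fin, mul_comm]

theorem stmt_16_general (d : ℕ)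
    (c : EuclideanSpace ℝ (Fin d)) (r : ℝ)
    (l : ℕ) (hl : 1 ≤ l) :
    {j : Fin d → Fin (2 ^ l) |
        dyadicCube d l (fun i => (j i : ℕ)) ⊆ Metric.ball c r ∧
        ¬ dyadicCube d (l - 1) (fun i => (j i : ℕ) / 2) ⊆ Metric.ball c r}.ncard ≤
      2 ^ d *
        {k : Fin d → Fin (2 ^ (l - 1)) |
          (dyadicCube d (l - 1) (fun i => (k i : ℕ)) ∩
            Metric.sphere c r).Nonempty}.ncard := by
  obtain ⟨l, rfl⟩ := Nat.exists_eq_add_of_le' hl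
  simp only [Nat.add_sub_cancel]
  refine ncard_le_two_pow_mul_ncard_of_dyadicParent_mem fun j ⟨hchild, hparent⟩ => ?_
  have hcorner := corner_mem_dyadicCube d (l + 1) (fun i => (j i : ℕ))
  exact (convex_dyadicCube d l _).isPreconnected.inter_sphere_nonempty_of_not_subset_ball
    ⟨_, dyadicCube_succ_subset d l _ hcorner, hchild hcorner⟩ hparent

theorem stmt_16 (d : ℕ) (hd : 1 ≤ d)
    (c : EuclideanSpace ℝ (Fin d)) (r : ℝ) (hr : 0 < r)
    (l : ℕ) (hl : 1 ≤ l) :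
    {j : Fin d → Fin (2 ^ l) |
        dyadicCube d l (fun i => (j i : ℕ)) ⊆ Metric.ball c r ∧
        ¬ dyadicCube d (l - 1) (fun i => (j i : ℕ) / 2) ⊆ Metric.ball c r}.ncard ≤
      2 ^ d *
        {k : Fin d → Fin (2 ^ (l - 1)) |
          (dyadicCube d (l - 1) (fun i => (k i : ℕ)) ∩
            Metric.sphere c r).Nonempty}.ncard :=
  stmt_16_general d c r l hl
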